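/- If the scheme (u^{n+1} - u^n)/Δt = -(r^{n+1}/√(E^n)) N^n holds in L²(Ω) and (r^{n+1} - r^n)/Δt = (1/(2√(E^n))) ∫_Ω N^n (u^{n+1}-u^n)/Δt dx, with E^n > 0 and Δt > 0, then (r^{n+1})² - (r^n)² = -(r^{n+1}/√(E^n))² ||N^n||²_{L²} Δt - (r^{n+1} - r^n)² ≤ 0. -/
import Mathlib


open MeasureTheory

theorem sav_first_order_scheme_dissipation
    {Ω : Type*} [MeasureSpace Ω]
    (u0 u1 N : Ω → ℝ) (r0 r1 En dt : ℝ) (hE : 0 < En) (hdt : 0 < dt)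
    (hNint : Integrable (fun x => (N x) ^ 2))
    (h1 : ∀ x, (u1 x - u0 x) / dt = -(r1 / Real.sqrt En) * N x)
    (h2 : (r1 - r0) / dt = (1 / (2 * Real.sqrt En)) * ∫ x, N x * ((u1 x - u0 x) / dt)) :
    r1 ^ 2 - r0 ^ 2 = -(r1 / Real.sqrt En) ^ 2 * (∫ x, (N x) ^ 2) * dt - (r1 - r0) ^ 2 ∧
    r1 ^ 2 - r0 ^ 2 ≤ 0 := by
  set I : ℝ := ∫ x, (N x) ^ 2 with hI
  have hs : Real.sqrt En > 0 := Real.sqrt_pos.mpr hE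
  have hsq : Real.sqrt En * Real.sqrt En = En := Real.mul_self_sqrt hE.le
  have hint : (∫ x, N x * ((u1 x - u0 x) / dt)) = -(r1 / Real.sqrt En) * I := by
    simp_rw [h1]
    rw [hI, ← integral_const_mul]
    congr 1 with x
    ring
  have hr : r1 - r0 = dt * ((1 / (2 * Real.sqrt En)) * (-(r1 / Real.sqrt En) * I)) := by
    rw [← hint, ← h2]
    field_simp
  have key : r1 ^ 2 - r0 ^ 2 = -(r1 / Real.sqrt En) ^ 2 * I * dt - (r1 - r0) ^ 2 := by
    have h2r : 2 * r1 * (r1 - r0) = -(r1 / Real.sqrt En) ^ 2 * I * dt := by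
      rw [hr]
      field_simp
    nlinarith [h2r]
  have hInn : 0 ≤ I := integral_nonneg fun x => sq_nonneg _
  refine ⟨key, ?_⟩
  rw [key]
  have : 0 ≤ (r1 / Real.sqrt En) ^ 2 * I * dt := by positivity
  nlinarith [sq_nonneg (r1 - r0)]
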